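/- With F_n(w) = (1/(2√w))·sqrt(c_n(w)/a_n(w))·sqrt((a_n(w)·c_n(w) − b_n(w)²)/(w·a_n(w)²)), one has ∫_2^∞ F_n(w) dw ≤ n for all positive integers n. -/

import Mathlib

/-!
For `w > 1` the weights `w ^ j / a_n(w)` on `{0, …, n}` form a probability distribution with
variance `(a c - b²) / a²`. The variance is at most the second moment about `n`, which after the
reflection `j ↦ n - j` is the truncated series `∑ k² w⁻ᵏ / ∑ w⁻ᵏ`; summing the numerator to
infinity and bounding the denominator below by `1 + w⁻¹` gives
`(a c - b²) / a² ≤ w² / (w - 1)³`. Together with `c / a ≤ n²` this yields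
`F_n(w) ≤ (n / 2) (w - 1)^(-3/2)`, whose integral over `(2, ∞)` is `n`.
-/

open Finset Real

noncomputable def aa (n : ℕ) (w : ℝ) : ℝ := ∑ j ∈ Finset.range (n+1), w ^ j
noncomputable def bb (n : ℕ) (w : ℝ) : ℝ := ∑ j ∈ Finset.range (n+1), (j : ℝ) * w ^ j
noncomputable def cc (n : ℕ) (w : ℝ) : ℝ := ∑ j ∈ Finset.range (n+1), (j : ℝ)^2 * w ^ j

noncomputable def F (n : ℕ) (w : ℝ) : ℝ :=
  (1 / (2 * Real.sqrt w)) * Real.sqrt (cc n w / aa n w) *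
    Real.sqrt ((aa n w * cc n w - (bb n w)^2) / (w * (aa n w)^2))

open MeasureTheory

theorem integrableOn_Ioi_sub_rpow {a c r : ℝ} (hr : r < -1) (hca : c < a) :
    IntegrableOn (fun w : ℝ => (w - c) ^ r) (Set.Ioi a) := by
  have := (measurePreserving_sub_right volume c).integrableOn_comp_preimage
    (measurableEmbedding_subRight c) (f := fun u : ℝ => u ^ r) (s := Set.Ioi (a - c))
  rw [Set.preimage_sub_const_Ioi, sub_add_cancel] at this
  exact this.2 (integrableOn_Ioi_rpow_of_lt hr (sub_pos.2 hca))

theorem integral_Ioi_sub_rpow {a c r : ℝ} (hr : r < -1) (hca : c < a) :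
    ∫ w in Set.Ioi a, (w - c) ^ r = -(a - c) ^ (r + 1) / (r + 1) := by
  have := (measurePreserving_sub_right volume c).setIntegral_preimage_emb
    (measurableEmbedding_subRight c) (fun u : ℝ => u ^ r) (Set.Ioi (a - c))
  rw [Set.preimage_sub_const_Ioi, sub_add_cancel] at this
  rw [this, integral_Ioi_rpow_of_lt hr (sub_pos.2 hca)]

theorem sum_mul_sum_sq_sub_sq_le {ι : Type*} (s : Finset ι) (p v : ι → ℝ) (t : ℝ) :
    (∑ i ∈ s, p i) * (∑ i ∈ s, v i ^ 2 * p i) - (∑ i ∈ s, v i * p i) ^ 2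
      ≤ (∑ i ∈ s, p i) * ∑ i ∈ s, (t - v i) ^ 2 * p i := by
  have hexpand : ∑ i ∈ s, (t - v i) ^ 2 * p i
      = t ^ 2 * ∑ i ∈ s, p i - 2 * t * ∑ i ∈ s, v i * p i + ∑ i ∈ s, v i ^ 2 * p i := by
    rw [mul_sum, mul_sum, ← sum_sub_distrib, ← sum_add_distrib]
    exact sum_congr rfl fun i _ => by ring
  rw [hexpand]
  -- the difference of the two sides is `(t ∑ p - ∑ v p) ^ 2`
  nlinarith [sq_nonneg (t * ∑ i ∈ s, p i - ∑ i ∈ s, v i * p i)]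

theorem sum_range_mul_pow_reflect (f : ℕ → ℝ) {w : ℝ} (hw : w ≠ 0) (n : ℕ) :
    ∑ j ∈ range (n + 1), f (n - j) * w ^ j = w ^ n * ∑ k ∈ range (n + 1), f k * w⁻¹ ^ k := by
  rw [← sum_range_reflect, mul_sum]
  refine sum_congr rfl fun j hj => ?_
  have hjn : j ≤ n := Nat.lt_succ_iff.mp (mem_range.mp hj)
  rw [Nat.add_sub_cancel, Nat.sub_sub_self hjn, ← Nat.sub_add_cancel hjn, pow_add,
    Nat.sub_add_cancel hjn, inv_pow]
  field_simp

theorem sum_range_sq_mul_pow_eq {x : ℝ} (hx : x ≠ 1) (m : ℕ) :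
    ∑ k ∈ range (m + 1), (k : ℝ) ^ 2 * x ^ k
      = x * (1 + x) / (1 - x) ^ 3 - x ^ (m + 1) *
        (((m : ℝ) + 1) ^ 2 / (1 - x) + 2 * ((m : ℝ) + 1) * x / (1 - x) ^ 2
          + x * (1 + x) / (1 - x) ^ 3) := by
  have h : 1 - x ≠ 0 := sub_ne_zero.2 hx.symm
  induction m with
  | zero => simp only [zero_add, range_one, sum_singleton]; field_simp; ring
  | succ m ih =>
    rw [sum_range_succ, ih]
    push_cast
    field_simp
    ring

theorem sum_range_sq_mul_pow_le {x : ℝ} (hx0 : 0 ≤ x) (hx1 : x < 1) (m : ℕ) :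
    ∑ k ∈ range (m + 1), (k : ℝ) ^ 2 * x ^ k ≤ x * (1 + x) / (1 - x) ^ 3 := by
  rw [sum_range_sq_mul_pow_eq hx1.ne m, sub_le_self_iff]
  have : 0 < 1 - x := by linarith
  positivity

theorem sum_range_sq_mul_pow_le_mul_sum_pow {x : ℝ} (hx0 : 0 ≤ x) (hx1 : x < 1) {m : ℕ}
    (hm : 1 ≤ m) :
    ∑ k ∈ range (m + 1), (k : ℝ) ^ 2 * x ^ k ≤ x / (1 - x) ^ 3 * ∑ k ∈ range (m + 1), x ^ k := by
  have h01 : 1 + x ≤ ∑ k ∈ range (m + 1), x ^ k := by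
    have := sum_le_sum_of_subset_of_nonneg (range_subset_range.2 (by omega : 2 ≤ m + 1))
      (fun k _ _ => pow_nonneg hx0 k)
    simpa [sum_range_succ] using this
  calc ∑ k ∈ range (m + 1), (k : ℝ) ^ 2 * x ^ k ≤ x / (1 - x) ^ 3 * (1 + x) := by
        rw [div_mul_eq_mul_div]; exact sum_range_sq_mul_pow_le hx0 hx1 m
    _ ≤ _ := by
        have : 0 < 1 - x := by linarith
        gcongr

theorem aa_pos (n : ℕ) {w : ℝ} (hw : 0 < w) : 0 < aa n w :=
  sum_pos (fun j _ => pow_pos hw j) nonempty_range_add_one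

theorem cc_le_sq_mul_aa (n : ℕ) {w : ℝ} (hw : 0 ≤ w) : cc n w ≤ (n : ℝ) ^ 2 * aa n w := by
  rw [cc, aa, mul_sum]
  refine sum_le_sum fun j hj => ?_
  have hjn : (j : ℝ) ≤ n := by exact_mod_cast Nat.lt_succ_iff.mp (mem_range.mp hj)
  gcongr

theorem aa_mul_cc_sub_bb_sq_le {n : ℕ} (hn : 1 ≤ n) {w : ℝ} (hw : 1 < w) :
    aa n w * cc n w - bb n w ^ 2 ≤ w ^ 2 / (w - 1) ^ 3 * aa n w ^ 2 := by
  have hw0 : w ≠ 0 := by positivity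
  have hx0 : 0 ≤ w⁻¹ := by positivity
  have hx1 : w⁻¹ < 1 := inv_lt_one_of_one_lt₀ hw
  have hcentral : ∑ j ∈ range (n + 1), ((n : ℝ) - j) ^ 2 * w ^ j
      = w ^ n * ∑ k ∈ range (n + 1), (k : ℝ) ^ 2 * w⁻¹ ^ k := by
    rw [← sum_range_mul_pow_reflect (fun k => (k : ℝ) ^ 2) hw0]
    refine sum_congr rfl fun j hj => ?_
    rw [Nat.cast_sub (Nat.lt_succ_iff.mp (mem_range.mp hj))]
  have haa : aa n w = w ^ n * ∑ k ∈ range (n + 1), w⁻¹ ^ k := by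
    simpa [aa] using sum_range_mul_pow_reflect (fun _ => (1 : ℝ)) hw0 n
  have hconst : w⁻¹ / (1 - w⁻¹) ^ 3 = w ^ 2 / (w - 1) ^ 3 := by
    have : w - 1 ≠ 0 := by linarith
    field_simp
  calc aa n w * cc n w - bb n w ^ 2
      ≤ aa n w * ∑ j ∈ range (n + 1), ((n : ℝ) - j) ^ 2 * w ^ j :=
        sum_mul_sum_sq_sub_sq_le (range (n + 1)) (w ^ ·) (fun j : ℕ => (j : ℝ)) n
    _ ≤ aa n w * (w ^ n * (w⁻¹ / (1 - w⁻¹) ^ 3 * ∑ k ∈ range (n + 1), w⁻¹ ^ k)) := by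
        rw [hcentral]
        have haa_pos := aa_pos n (by linarith : 0 < w)
        gcongr
        exact sum_range_sq_mul_pow_le_mul_sum_pow hx0 hx1 hn
    _ = w ^ 2 / (w - 1) ^ 3 * aa n w ^ 2 := by
        rw [← hconst, haa]; ring

theorem rpow_neg_three_halves_sq {u : ℝ} (hu : 0 ≤ u) :
    (u ^ (-(3 / 2) : ℝ)) ^ 2 = (u ^ 3)⁻¹ := by
  rw [← rpow_natCast, ← rpow_mul hu, show (-(3 / 2) : ℝ) * (2 : ℕ) = -(3 : ℕ) by norm_num,
    rpow_neg hu, rpow_natCast]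

theorem F_le {n : ℕ} (hn : 1 ≤ n) {w : ℝ} (hw : 1 < w) :
    F n w ≤ n / 2 * (w - 1) ^ (-(3 / 2) : ℝ) := by
  have hw0 : 0 < w := by linarith
  have haa := aa_pos n hw0
  have hc : √(cc n w / aa n w) ≤ n := by
    rw [sqrt_le_left (Nat.cast_nonneg n), div_le_iff₀ haa]
    exact cc_le_sq_mul_aa n hw0.le
  have hv : √((aa n w * cc n w - bb n w ^ 2) / (w * aa n w ^ 2))
      ≤ √w * (w - 1) ^ (-(3 / 2) : ℝ) := by
    rw [← sqrt_sq (by positivity : 0 ≤ (w - 1) ^ (-(3 / 2) : ℝ)), ← sqrt_mul hw0.le,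
      rpow_neg_three_halves_sq (by linarith)]
    refine sqrt_le_sqrt ?_
    rw [div_le_iff₀ (by positivity)]
    calc aa n w * cc n w - bb n w ^ 2 ≤ w ^ 2 / (w - 1) ^ 3 * aa n w ^ 2 :=
          aa_mul_cc_sub_bb_sq_le hn hw
      _ = w * ((w - 1) ^ 3)⁻¹ * (w * aa n w ^ 2) := by ring
  calc F n w ≤ 1 / (2 * √w) * n * (√w * (w - 1) ^ (-(3 / 2) : ℝ)) := by
        rw [F]; gcongr
    _ = n / 2 * (w - 1) ^ (-(3 / 2) : ℝ) := by
        have : 0 < √w := sqrt_pos.2 hw0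
        field_simp

theorem F_nonneg (n : ℕ) (w : ℝ) : 0 ≤ F n w := by
  rw [F]; positivity

theorem stmt9 (n : ℕ) (hn : 1 ≤ n) :
    ∫ w in Set.Ioi (2 : ℝ), F n w ≤ (n : ℝ) := by
  have hg : IntegrableOn (fun w : ℝ => n / 2 * (w - 1) ^ (-(3 / 2) : ℝ)) (Set.Ioi 2) :=
    (integrableOn_Ioi_sub_rpow (by norm_num) one_lt_two).const_mul _
  calc ∫ w in Set.Ioi (2 : ℝ), F n w
        ≤ ∫ w in Set.Ioi (2 : ℝ), n / 2 * (w - 1) ^ (-(3 / 2) : ℝ) :=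
        integral_mono_of_nonneg (.of_forall (F_nonneg n)) hg <| by
          filter_upwards [ae_restrict_mem measurableSet_Ioi] with w hw
          exact F_le hn (one_lt_two.trans hw)
    _ = n := by
        rw [integral_const_mul, integral_Ioi_sub_rpow (by norm_num) one_lt_two]
        norm_num
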